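/- arXiv:1409.5056 — 2 statements merged into one kernel-verified Lean document; each statement's English description precedes it below -/
import Mathlib

section
/- Let α : ℤ → {0,1} satisfy P_α(n) = 2ⁿ for all positive integers n, and define η : ℤ² → {0,1,2,3} by η(n,k) = α(n) for k ≠ 0 and η(n,0) = α(n) + 2. Then for every compact set K ⊆ ℝ², setting k₁ = |{i ∈ ℤ : K ∩ ({i} × ℤ) ≠ ∅}| and k₂ = |{j ∈ ℤ : K ∩ (ℤ × {j}) ≠ ∅}|, one has P_η(K) = (k₂ + 1) · 2^{k₁}. -/
open Filter Set

noncomputable section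

/-- The plane `ℝ²`. -/
abbrev R2 := EuclideanSpace ℝ (Fin 2)

/-- The embedding of `ℤ²` into `ℝ²`. -/
def toR2 (p : ℤ × ℤ) : R2 := (WithLp.equiv 2 (Fin 2 → ℝ)).symm ![(p.1 : ℝ), (p.2 : ℝ)]

def e1 : R2 := (WithLp.equiv 2 (Fin 2 → ℝ)).symm ![1, 0]
def e2 : R2 := (WithLp.equiv 2 (Fin 2 → ℝ)).symm ![0, 1]

variable {A : Type*}

/-- The translate `Tⁿη`. -/
def Tr (η : ℤ × ℤ → A) (n : ℤ × ℤ) : ℤ × ℤ → A := fun x => η (x + n)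

/-- The number of distinct `η`-colorings of a set `S ⊆ ℤ²`. -/
def colorCount (η : ℤ × ℤ → A) (S : Set (ℤ × ℤ)) : ℕ :=
  Set.ncard {f : S → A | ∃ n : ℤ × ℤ, ∀ x : S, f x = η ((x : ℤ × ℤ) + n)}

/-- The integer points of a subset of the plane. -/
def latticePts (K : Set R2) : Set (ℤ × ℤ) := {p | toR2 p ∈ K}

/-- The complexity `P_η(K)` for `K ⊆ ℝ²`. -/
def Pc (η : ℤ × ℤ → A) (K : Set R2) : ℕ := colorCount η (latticePts K)

/-- The rectangle complexity `P_η(n,k)`. -/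
def Prect (η : ℤ × ℤ → A) (n k : ℕ) : ℕ :=
  colorCount η {p : ℤ × ℤ | 0 ≤ p.1 ∧ p.1 < (n : ℤ) ∧ 0 ≤ p.2 ∧ p.2 < (k : ℤ)}

/-- The `t`-neighborhood `[0, su]^(t)` of the segment `[0, su]`. -/
def segNbhd (u : R2) (s t : ℝ) : Set R2 :=
  {v | ∃ w ∈ segment ℝ (0 : R2) (s • u), dist v w < t}

/-- The directional entropy `h(u)`. -/
def dirEnt (η : ℤ × ℤ → A) (u : R2) : EReal :=
  ⨆ t : Set.Ioi (0 : ℝ),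
    Filter.limsup (fun s : ℝ => ((Real.log (Pc η (segNbhd u s (t : ℝ))) / s : ℝ) : EReal))
      Filter.atTop

/-- `f` agrees on `S` with some translate of `η`. -/
def IsColoring (η : ℤ × ℤ → A) (S : Set (ℤ × ℤ)) (f : ℤ × ℤ → A) : Prop :=
  ∃ n : ℤ × ℤ, ∀ x ∈ S, f x = η (x + n)

/-- The `η`-coloring `f` of `S` extends uniquely to an `η`-coloring of `T`. -/
def ExtendsUniquely (η : ℤ × ℤ → A) (S T : Set (ℤ × ℤ)) (f : ℤ × ℤ → A) : Prop :=
  (∃ g, IsColoring η T g ∧ ∀ x ∈ S, g x = f x) ∧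
    ∀ g g', IsColoring η T g → IsColoring η T g' →
      (∀ x ∈ S, g x = f x) → (∀ x ∈ S, g' x = f x) → ∀ x ∈ T, g x = g' x

/-- `S = conv(S) ∩ ℤ²`. -/
def IsLatticeConvex (S : Set (ℤ × ℤ)) : Prop :=
  ∀ p : ℤ × ℤ, toR2 p ∈ convexHull ℝ (toR2 '' S) → p ∈ S

/-- `x` is `η`-generated by `S`. -/
def IsGenerated (η : ℤ × ℤ → A) (S : Set (ℤ × ℤ)) (x : ℤ × ℤ) : Prop :=
  ∀ f : ℤ × ℤ → A, IsColoring η (S \ {x}) f → ExtendsUniquely η (S \ {x}) S f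

/-- `S` is an `η`-generating set. -/
def IsGeneratingSet (η : ℤ × ℤ → A) (S : Set (ℤ × ℤ)) : Prop :=
  S.Finite ∧ S.Nonempty ∧ IsLatticeConvex S ∧
    ∀ x ∈ S, toR2 x ∈ frontier (convexHull ℝ (toR2 '' S)) → IsGenerated η S x

/-- For `v = (v₁, v₂)`, `perp v = (v₂, -v₁)`. -/
def perp (v : R2) : R2 := (WithLp.equiv 2 (Fin 2 → ℝ)).symm ![v 1, -(v 0)]

/-- `E_v(S)`: the integer points of the edge of `S` in direction `v`. -/
def edgeSet (v : R2) (S : Set (ℤ × ℤ)) : Set (ℤ × ℤ) :=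
  {x ∈ S | ∀ y ∈ S, (inner ℝ (toR2 y) (perp v) : ℝ) ≤ inner ℝ (toR2 x) (perp v)}

/-- `x` is an endpoint of `E_v(S)`. -/
def IsEndpoint (v : R2) (S : Set (ℤ × ℤ)) (x : ℤ × ℤ) : Prop :=
  x ∈ edgeSet v S ∧ toR2 x ∉ convexHull ℝ (toR2 '' (edgeSet v S \ {x}))

/-- `S` is `v`-balanced for `η`. -/
def IsBalanced (η : ℤ × ℤ → A) (v : R2) (S : Set (ℤ × ℤ)) : Prop :=
  S.Finite ∧ IsLatticeConvex S ∧ S ≠ edgeSet v S ∧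
    (∀ x, IsEndpoint v S x → IsGenerated η S x) ∧
    colorCount η S < colorCount η (S \ edgeSet v S) + (edgeSet v S).ncard ∧
    ∀ w : R2, ({x ∈ S | ∃ c : ℝ, toR2 x = w + c • v}).Nonempty →
      (edgeSet v S).ncard ≤ ({x ∈ S | ∃ c : ℝ, toR2 x = w + c • v}).ncard + 1

/-- `J_{T,v,S}`. -/
def Jset (v : R2) (S T : Set (ℤ × ℤ)) : Set (ℤ × ℤ) :=
  {j | ((fun x => x + j) '' S) \ T = (fun x => x + j) '' edgeSet v S}

/-- `J_{T,v,S,p}`: `J_{T,v,S}` with the `p` points nearest each endpoint removed. -/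
def JsetP (v : R2) (S T : Set (ℤ × ℤ)) (p : ℕ) : Set (ℤ × ℤ) :=
  {j ∈ Jset v S T |
    p ≤ ({j' ∈ Jset v S T | (inner ℝ (toR2 j') v : ℝ) < inner ℝ (toR2 j) v}).ncard ∧
    p ≤ ({j' ∈ Jset v S T | (inner ℝ (toR2 j) v : ℝ) < inner ℝ (toR2 j') v}).ncard}

/-- `ext¹_{v,S,p}(T)`. -/
def ext1 (v : R2) (S : Set (ℤ × ℤ)) (p : ℕ) (T : Set (ℤ × ℤ)) : Set (ℤ × ℤ) :=
  T ∪ ⋃ j ∈ JsetP v S T p, (fun x => x + j) '' S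

/-- `ext^m_{v,S,p}(T)`. -/
def extN (v : R2) (S : Set (ℤ × ℤ)) (p : ℕ) (m : ℕ) (T : Set (ℤ × ℤ)) : Set (ℤ × ℤ) :=
  (ext1 v S p)^[m] T

/-- The border `∂_{v,S,p}(T)`. -/
def border (v : R2) (S : Set (ℤ × ℤ)) (p : ℕ) (T : Set (ℤ × ℤ)) : Set (ℤ × ℤ) :=
  ⋃ j ∈ JsetP v S T p, (fun x => x + j) '' (S \ edgeSet v S)

/-- The integer points of the rectangle `[a,b] × [c,d]`. -/
def rect (a b c d : ℤ) : Set (ℤ × ℤ) := {p | a ≤ p.1 ∧ p.1 ≤ b ∧ c ≤ p.2 ∧ p.2 ≤ d}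

/-- `f` is (the restriction to `T` of) an `(S,η)`-coloring. -/
def IsSColoringOf (η : ℤ × ℤ → A) (S T : Set (ℤ × ℤ)) (f : ℤ × ℤ → A) : Prop :=
  ∃ g : ℤ × ℤ → A, (∀ x ∈ T, g x = f x) ∧ ∀ j : ℤ × ℤ, IsColoring η ((fun x => x + j) '' S) g

/-- `f|_R` extends uniquely to an `(S,η)`-coloring of `T`. -/
def ExtendsUniquelyS (η : ℤ × ℤ → A) (S R T : Set (ℤ × ℤ)) (f : ℤ × ℤ → A) : Prop :=
  (∃ g, IsSColoringOf η S T g ∧ ∀ x ∈ R, g x = f x) ∧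
    ∀ g g', IsSColoringOf η S T g → IsSColoringOf η S T g' →
      (∀ x ∈ R, g x = f x) → (∀ x ∈ R, g' x = f x) → ∀ x ∈ T, g x = g' x

/-- `f` is vertically periodic on `X` with period `p`. -/
def VertPeriodicOn (f : ℤ × ℤ → A) (X : Set (ℤ × ℤ)) (p : ℤ) : Prop :=
  ∀ q : ℤ × ℤ, q ∈ X → q + (0, p) ∈ X → f (q + (0, p)) = f q

/-- The thickness `τ_u(K)` of `K` in direction `u`. -/
def thickness (u : R2) (K : Set R2) : ℝ :=
  sSup {τ : ℝ | 0 ≤ τ ∧ ∃ n : ℤ × ℤ, (fun v => v + toR2 n) '' segment ℝ (0 : R2) (τ • u) ⊆ K}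

/-- One-dimensional word complexity `P_α(n)`. -/
def wordCount (α : ℤ → A) (n : ℕ) : ℕ :=
  Set.ncard {w : Fin n → A | ∃ m : ℤ, ∀ j : Fin n, w j = α (m + (j : ℕ))}

section Topological

variable [TopologicalSpace A]

/-- The orbit closure `X_η` in the product topology. -/
def Xeta (η : ℤ × ℤ → A) : Set (ℤ × ℤ → A) := closure {g | ∃ n : ℤ × ℤ, g = Tr η n}

/-- A line `ℓ ⊆ ℝ²` is expansive for `X_η`. -/
def IsExpansiveLine (η : ℤ × ℤ → A) (ℓ : Set R2) : Prop :=
  ∃ r > 0, ∀ x ∈ Xeta η, ∀ y ∈ Xeta η,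
    (∀ n : ℤ × ℤ, Metric.infDist (toR2 n) ℓ < r → x n = y n) → x = y

/-- The line through the origin in direction `u`. -/
def lineThrough (u : R2) : Set R2 := {v | ∃ c : ℝ, v = c • u}

open Classical in
/-- The metric `ρ` on `𝒜^{ℤ²}`. -/
def rho (x y : ℤ × ℤ → A) : ℝ :=
  if x = y then 0
  else (2 : ℝ) ^ (-(sInf {r : ℝ | ∃ m : ℤ × ℤ, x m ≠ y m ∧ ‖toR2 m‖ = r}))

/-- The covering number `N_T(E, ε)`. -/
def Ncount (η : ℤ × ℤ → A) (E : Set R2) (ε : ℝ) : ℕ :=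
  sInf {c : ℕ | ∃ Y : Finset (ℤ × ℤ → A), Y.card = c ∧ ↑Y ⊆ Xeta η ∧
    ∀ x ∈ Xeta η, ∃ y ∈ Y, ∀ n : ℤ × ℤ, toR2 n ∈ E → rho (Tr x n) (Tr y n) < ε}

end Topological

end

/-!
A translate of `η` restricted to `S = K ∩ ℤ²` reads `x ↦ α (x.1 + a) + 2 * [x.2 + b = 0]`, and
the two summands can be read off separately. So the pattern determines and is determined by the
pair formed by the window of `α` on the columns of `S` shifted by `a` and the indicator of the
marked row `-b` among the rows of `S`. Full complexity of `α` makes all `2 ^ k₁` binary windows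
occur, while the indicator is either that of one of the `k₂` rows of `S` or identically false.
-/

def patterns {B : Type*} (β : ℤ → B) (I : Set ℤ) : Set (I → B) :=
  range fun a : ℤ => fun i : I => β (i + a)

theorem colorCount_eq_ncard_range {A : Type*} (η : ℤ × ℤ → A) (S : Set (ℤ × ℤ)) :
    colorCount η S = (range fun n : ℤ × ℤ => fun x : S => η (x + n)).ncard := by
  refine congrArg ncard (ext fun f => ?_)
  simp only [mem_ofPred_eq, mem_range, funext_iff, eq_comm]

theorem colorCount_uncurry_eq_mul {A B C : Type*} {β : ℤ → B} {γ : ℤ → C} {g : B → C → A}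
    (hg : InjOn (Function.uncurry g) (range β ×ˢ range γ)) (S : Set (ℤ × ℤ)) :
    colorCount (fun p => g (β p.1) (γ p.2)) S =
      (patterns β (Prod.fst '' S)).ncard * (patterns γ (Prod.snd '' S)).ncard := by
  set Φ : ((Prod.fst '' S) → B) × ((Prod.snd '' S) → C) → (S → A) :=
    fun uv x => g (uv.1 ⟨_, mem_image_of_mem _ x.2⟩) (uv.2 ⟨_, mem_image_of_mem _ x.2⟩)
  have hrange : (range fun n : ℤ × ℤ => fun x : S => g (β (x + n).1) (γ (x + n).2)) =
      Φ '' (patterns β (Prod.fst '' S) ×ˢ patterns γ (Prod.snd '' S)) := by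
    ext f
    simp only [patterns, mem_range, mem_image, mem_prod, Prod.exists]
    constructor
    · rintro ⟨a, b, rfl⟩
      exact ⟨_, _, ⟨⟨a, rfl⟩, ⟨b, rfl⟩⟩, rfl⟩
    · rintro ⟨_, _, ⟨⟨a, rfl⟩, ⟨b, rfl⟩⟩, rfl⟩
      exact ⟨a, b, rfl⟩
  have hinj : InjOn Φ (patterns β (Prod.fst '' S) ×ˢ patterns γ (Prod.snd '' S)) := by
    rintro ⟨_, _⟩ ⟨⟨a, rfl⟩, ⟨b, rfl⟩⟩ ⟨_, _⟩ ⟨⟨a', rfl⟩, ⟨b', rfl⟩⟩ h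
    have key : ∀ x : S, β (x.1.1 + a) = β (x.1.1 + a') ∧ γ (x.1.2 + b) = γ (x.1.2 + b') :=
      fun x => Prod.ext_iff.1 <| hg (x₁ := (β (x.1.1 + a), γ (x.1.2 + b)))
        (x₂ := (β (x.1.1 + a'), γ (x.1.2 + b'))) ⟨mem_range_self _, mem_range_self _⟩
        ⟨mem_range_self _, mem_range_self _⟩ (congrFun h x)
    refine Prod.ext (funext ?_) (funext ?_)
    · rintro ⟨_, x, hx, rfl⟩
      exact (key ⟨x, hx⟩).1
    · rintro ⟨_, x, hx, rfl⟩
      exact (key ⟨x, hx⟩).2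
  rw [colorCount_eq_ncard_range, hrange, hinj.ncard_image, ncard_prod]

section FullComplexity

variable {A : Type*} {α : ℤ → A} {B : Finset A}

theorem exists_eq_word_of_wordCount_eq_pow (hαB : ∀ x, α x ∈ B)
    (hα : ∀ n, 0 < n → wordCount α n = B.card ^ n) {n : ℕ} {w : Fin n → A}
    (hw : ∀ j, w j ∈ B) : ∃ m : ℤ, ∀ j : Fin n, w j = α (m + (j : ℕ)) := by
  rcases Nat.eq_zero_or_pos n with rfl | hn
  · exact ⟨0, finZeroElim⟩
  have hsub : {w : Fin n → A | ∃ m : ℤ, ∀ j : Fin n, w j = α (m + (j : ℕ))} ⊆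
      (Fintype.piFinset fun _ : Fin n => B : Set (Fin n → A)) := by
    rintro _ ⟨m, hm⟩
    simpa [hm] using fun j => hαB _
  have hall := eq_of_subset_of_ncard_le hsub (by
    rw [ncard_coe_finset, Fintype.card_piFinset_const]; exact (hα n hn).ge) (toFinite _)
  have hw' : w ∈ (Fintype.piFinset fun _ : Fin n => B : Set (Fin n → A)) := by simpa using hw
  rw [← hall] at hw'
  exact hw'

theorem patterns_eq_pi_of_wordCount_eq_pow (hαB : ∀ x, α x ∈ B)
    (hα : ∀ n, 0 < n → wordCount α n = B.card ^ n) {I : Set ℤ} (hI : I.Finite) :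
    patterns α I = Set.pi univ fun _ => (B : Set A) := by
  classical
  refine Subset.antisymm (by rintro _ ⟨a, rfl⟩ i -; exact hαB _) fun w hw => ?_
  rcases isEmpty_or_nonempty I with hI₀ | ⟨⟨i₀⟩⟩
  · exact ⟨0, funext hI₀.elim⟩
  obtain ⟨lo, hlo⟩ := hI.bddBelow
  obtain ⟨up, hup⟩ := hI.bddAbove
  set v : Fin (up - lo).toNat.succ → A := fun j =>
    if h : lo + (j : ℕ) ∈ I then w ⟨_, h⟩ else w i₀
  obtain ⟨m, hm⟩ := exists_eq_word_of_wordCount_eq_pow hαB hα (w := v)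
    (fun j => by unfold v; split_ifs <;> exact hw _ (mem_univ _))
  refine ⟨m - lo, funext fun ⟨i, hi⟩ => ?_⟩
  have h₁ := hlo hi
  have h₂ := hup hi
  have := hm ⟨(i - lo).toNat, by omega⟩
  simp only [v, Int.toNat_of_nonneg (sub_nonneg.2 h₁), add_sub_cancel, dif_pos hi] at this
  rw [this]
  exact congrArg α (by ring)

theorem ncard_patterns_of_wordCount_eq_pow (hαB : ∀ x, α x ∈ B)
    (hα : ∀ n, 0 < n → wordCount α n = B.card ^ n) {I : Set ℤ} (hI : I.Finite) :
    (patterns α I).ncard = B.card ^ I.ncard := by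
  have := hI.fintype
  rw [patterns_eq_pi_of_wordCount_eq_pow hαB hα hI, ← Fintype.coe_piFinset, ncard_coe_finset,
    Fintype.card_piFinset, Finset.prod_const, Finset.card_univ, ← Nat.card_eq_fintype_card,
    Nat.card_coe_set_eq]

end FullComplexity

theorem patterns_decide_eq_zero_eq_range {J : Set ℤ} (hJ : J.Finite) :
    patterns (fun k : ℤ => decide (k = 0)) J =
      range fun o : Option J => fun j => decide (o = some j) := by
  classical
  ext v
  constructor
  · rintro ⟨b, rfl⟩
    refine ⟨if h : -b ∈ J then some ⟨-b, h⟩ else none, funext fun ⟨j, hj⟩ => ?_⟩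
    split_ifs with h
    · simp [neg_eq_iff_add_eq_zero, add_comm]
    · have : j + b ≠ 0 := fun hjb => h (by rwa [show -b = j by omega])
      simp [this]
  · rintro ⟨o, rfl⟩
    cases o with
    | none =>
      obtain ⟨b, hb⟩ := hJ.exists_notMem
      refine ⟨-b, funext fun ⟨j, hj⟩ => ?_⟩
      have : j + -b ≠ 0 := fun hjb => hb (by rwa [show b = j by omega])
      simp [this]
    | some j₀ => exact ⟨-j₀, funext fun j => by
      simp only [Option.some.injEq, Subtype.ext_iff, decide_eq_decide]; omega⟩

theorem injective_decide_eq_some {α : Type*} [DecidableEq α] :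
    Function.Injective fun o : Option α => fun a => decide (o = some a) := by
  intro o o' h
  cases o <;> cases o' <;> simp_all [funext_iff]

theorem ncard_patterns_decide_eq_zero {J : Set ℤ} (hJ : J.Finite) :
    (patterns (fun k : ℤ => decide (k = 0)) J).ncard = J.ncard + 1 := by
  have := hJ.to_subtype
  rw [patterns_decide_eq_zero_eq_range hJ, ncard_range_of_injective injective_decide_eq_some,
    Finite.card_option, Nat.card_coe_set_eq]

theorem finite_intCast_preimage_of_isCompact {s : Set ℝ} (hs : IsCompact s) :
    (((↑) : ℤ → ℝ) ⁻¹' s).Finite := by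
  simpa using Filter.mem_cofinite.1 (Int.tendsto_coe_cofinite hs.compl_mem_cocompact)

theorem IsCompact.finite_fst_image_latticePts {K : Set R2} (hK : IsCompact K) :
    (Prod.fst '' latticePts K).Finite :=
  (finite_intCast_preimage_of_isCompact (hK.image (f := fun x : R2 => x 0) (by fun_prop))).subset
    (by rintro _ ⟨p, hp, rfl⟩; exact ⟨_, hp, rfl⟩)

theorem IsCompact.finite_snd_image_latticePts {K : Set R2} (hK : IsCompact K) :
    (Prod.snd '' latticePts K).Finite :=
  (finite_intCast_preimage_of_isCompact (hK.image (f := fun x : R2 => x 1) (by fun_prop))).subset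
    (by rintro _ ⟨p, hp, rfl⟩; exact ⟨_, hp, rfl⟩)

theorem fst_image_latticePts (K : Set R2) :
    Prod.fst '' latticePts K = {i : ℤ | ∃ j : ℤ, toR2 (i, j) ∈ K} := by
  ext i
  simp [latticePts]

theorem snd_image_latticePts (K : Set R2) :
    Prod.snd '' latticePts K = {j : ℤ | ∃ i : ℤ, toR2 (i, j) ∈ K} := by
  ext j
  simp [latticePts]

theorem injOn_add_ite_two :
    InjOn (Function.uncurry fun (c : Fin 4) (m : Bool) => c + if m then 2 else 0)
      ({0, 1} ×ˢ univ) := by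
  rintro ⟨c, m⟩ ⟨hc, -⟩ ⟨c', m'⟩ ⟨hc', -⟩
  simp only [mem_insert_iff, mem_singleton_iff] at hc hc'
  rcases hc with rfl | rfl <;> rcases hc' with rfl | rfl <;> cases m <;> cases m' <;> decide

/-- the exact complexity formula for the example. -/
theorem stmt18 (α : ℤ → Fin 4) (hα01 : ∀ x : ℤ, α x = 0 ∨ α x = 1)
    (hα : ∀ n : ℕ, 0 < n → wordCount α n = 2 ^ n)
    (η : ℤ × ℤ → Fin 4)
    (hη : ∀ n k : ℤ, (k ≠ 0 → η (n, k) = α n) ∧ η (n, 0) = α n + 2) :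
    ∀ K : Set R2, IsCompact K →
      Pc η K = (Set.ncard {j : ℤ | ∃ i : ℤ, toR2 (i, j) ∈ K} + 1) *
        2 ^ Set.ncard {i : ℤ | ∃ j : ℤ, toR2 (i, j) ∈ K} := by
  intro K hK
  have hη' : η = fun p => α p.1 + if decide (p.2 = 0) then 2 else 0 := by
    funext ⟨n, k⟩
    by_cases hk : k = 0
    · simp [hk, (hη n k).2]
    · simp [hk, (hη n k).1 hk]
  have hαB : ∀ x, α x ∈ ({0, 1} : Finset (Fin 4)) := by simpa using hα01
  have hinj : InjOn (Function.uncurry fun (c : Fin 4) (m : Bool) => c + if m then 2 else 0)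
      (range α ×ˢ range fun k : ℤ => decide (k = 0)) :=
    injOn_add_ite_two.mono (prod_mono (by rintro _ ⟨x, rfl⟩; simpa using hα01 x) (subset_univ _))
  rw [Pc, hη', colorCount_uncurry_eq_mul hinj,
    ncard_patterns_of_wordCount_eq_pow hαB hα hK.finite_fst_image_latticePts,
    ncard_patterns_decide_eq_zero hK.finite_snd_image_latticePts, fst_image_latticePts,
    snd_image_latticePts, Finset.card_pair (by decide), mul_comm]
end

section
/- Let v be a unit vector and let S be a v-balanced set for η, and set h = |E_v(S)| − 1. Then the number of distinct η-colorings α of S such that the restriction α|_{S \ E_v(S)} extends in more than one way to an η-coloring of S is at most 2h. -/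
open Filter Set

/-!
Restriction from `S` to `S \ E_v(S)` maps the `η`-colorings of `S` onto those of `S \ E_v(S)`,
and a coloring extends non-uniquely exactly when its fiber has at least two elements. A fiber of
size `k ≥ 2` satisfies `k ≤ 2 (k - 1)`, so there are at most `2 (P_η(S) - P_η(S \ E_v(S)))` such
colorings, and condition (ii) of balancedness bounds this by `2 (|E_v(S)| - 1)`.
-/

open Finset in
theorem Finset.card_filter_exists_ne_apply_eq_le {α β : Type*} [DecidableEq β] (s : Finset α)
    (f : α → β) [DecidablePred fun a => ∃ b ∈ s, b ≠ a ∧ f b = f a] :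
    #{a ∈ s | ∃ b ∈ s, b ≠ a ∧ f b = f a} ≤ 2 * (#s - #(s.image f)) := by
  set B := {a ∈ s | ∃ b ∈ s, b ≠ a ∧ f b = f a}
  have hB : #B = ∑ d ∈ s.image f, #{a ∈ B | f a = d} :=
    card_eq_sum_card_fiberwise fun a ha => mem_image_of_mem f (mem_filter.1 ha).1
  -- A fiber of size `k` meets `B` in nothing if `k = 1`, and `k ≤ 2 * (k - 1)` once `k ≥ 2`.
  have hfiber : ∀ d ∈ s.image f, #{a ∈ B | f a = d} + 2 ≤ 2 * #{a ∈ s | f a = d} := by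
    intro d hd
    obtain ⟨a, ha, rfl⟩ := mem_image.1 hd
    have hsub : {a' ∈ B | f a' = f a} ⊆ {a' ∈ s | f a' = f a} :=
      filter_subset_filter _ (filter_subset _ _)
    rcases eq_empty_or_nonempty {a' ∈ B | f a' = f a} with hempty | ⟨a', ha'⟩
    · have : 0 < #{a' ∈ s | f a' = f a} := card_pos.2 ⟨a, mem_filter.2 ⟨ha, rfl⟩⟩
      rw [hempty, card_empty]
      omega
    · obtain ⟨⟨ha's, b, hb, hba, hfb⟩, hfa'⟩ := by simpa only [B, mem_filter] using ha'
      have : 1 < #{a' ∈ s | f a' = f a} :=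
        one_lt_card.2 ⟨a', mem_filter.2 ⟨ha's, hfa'⟩, b, mem_filter.2 ⟨hb, hfb.trans hfa'⟩,
          fun h => hba h.symm⟩
      have := card_le_card hsub
      omega
  have hsum := sum_le_sum hfiber
  rw [sum_add_distrib, ← hB, ← mul_sum, ← card_eq_sum_card_image, sum_const, smul_eq_mul] at hsum
  omega

theorem Set.ncard_setOf_exists_ne_apply_eq_le {α β : Type*} {s : Set α} (hs : s.Finite)
    (f : α → β) : {a ∈ s | ∃ b ∈ s, b ≠ a ∧ f b = f a}.ncard ≤ 2 * (s.ncard - (f '' s).ncard) := by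
  classical
  lift s to Finset α using hs
  simpa only [← Finset.coe_image, Set.ncard_coe_finset, ← Finset.coe_filter, Finset.mem_coe]
    using s.card_filter_exists_ne_apply_eq_le f

section Colorings

variable {A : Type*}

def colorings (η : ℤ × ℤ → A) (S : Set (ℤ × ℤ)) : Set (S → A) :=
  {f | ∃ n : ℤ × ℤ, ∀ x : S, f x = η ((x : ℤ × ℤ) + n)}

theorem colorCount_eq_ncard_colorings (η : ℤ × ℤ → A) (S : Set (ℤ × ℤ)) :
    colorCount η S = (colorings η S).ncard := rfl

theorem image_comp_inclusion_colorings (η : ℤ × ℤ → A) {S T : Set (ℤ × ℤ)} (h : T ⊆ S) :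
    (· ∘ Set.inclusion h) '' colorings η S = colorings η T := by
  ext f
  constructor
  · rintro ⟨g, ⟨n, hn⟩, rfl⟩
    exact ⟨n, fun x => hn _⟩
  · rintro ⟨n, hn⟩
    exact ⟨fun x => η (x + n), ⟨n, fun _ => rfl⟩, funext fun x => (hn x).symm⟩

theorem setOf_coloring_extends_nonuniquely_eq (η : ℤ × ℤ → A) (S E : Set (ℤ × ℤ)) :
    {f : S → A | (∃ n : ℤ × ℤ, ∀ x : S, f x = η ((x : ℤ × ℤ) + n)) ∧
        ∃ g g' : ℤ × ℤ → A, IsColoring η S g ∧ IsColoring η S g' ∧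
          (∀ x : S, (x : ℤ × ℤ) ∉ E → g (x : ℤ × ℤ) = f x ∧ g' (x : ℤ × ℤ) = f x) ∧
          ∃ x ∈ S, g x ≠ g' x} =
      {f ∈ colorings η S | ∃ f' ∈ colorings η S, f' ≠ f ∧
        f' ∘ Set.inclusion (S.sdiff_subset (t := E)) = f ∘ Set.inclusion S.sdiff_subset} := by
  ext f
  constructor
  · rintro ⟨hf, g, g', ⟨n, hg⟩, ⟨n', hg'⟩, hagree, x, hxS, hne⟩
    -- One of the restrictions of `g`, `g'` to `S` differs from `f`.
    by_cases hgf : (fun y : S => g y) = f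
    · refine ⟨hf, fun y => g' y, ⟨n', fun y => hg' y y.2⟩, ?_, ?_⟩
      · exact fun h => hne (congrFun (hgf.trans h.symm) ⟨x, hxS⟩)
      · exact funext fun y => (hagree _ y.2.2).2
    · exact ⟨hf, fun y => g y, ⟨n, fun y => hg y y.2⟩, hgf,
        funext fun y => (hagree _ y.2.2).1⟩
  · rintro ⟨⟨n, hn⟩, f', ⟨n', hn'⟩, hne, hres⟩
    obtain ⟨x, hx⟩ := Function.ne_iff.1 hne
    refine ⟨⟨n, hn⟩, fun y => η (y + n'), fun y => η (y + n), ⟨n', fun _ _ => rfl⟩,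
      ⟨n, fun _ _ => rfl⟩, fun y hy => ⟨?_, (hn y).symm⟩, x, x.2, ?_⟩
    · exact (hn' y).symm.trans (congrFun hres ⟨y, y.2, hy⟩)
    · simp only [← hn x, ← hn' x, ne_eq]
      exact hx

end Colorings

theorem stmt19_general {A : Type*} [Fintype A] (η : ℤ × ℤ → A) (v : R2)
    (S : Set (ℤ × ℤ)) (hS : IsBalanced η v S) :
    Set.ncard {f : S → A | (∃ n : ℤ × ℤ, ∀ x : S, f x = η ((x : ℤ × ℤ) + n)) ∧
        ∃ g g' : ℤ × ℤ → A, IsColoring η S g ∧ IsColoring η S g' ∧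
          (∀ x : S, (x : ℤ × ℤ) ∉ edgeSet v S →
            g (x : ℤ × ℤ) = f x ∧ g' (x : ℤ × ℤ) = f x) ∧
          ∃ x ∈ S, g x ≠ g' x} ≤
      2 * ((edgeSet v S).ncard - 1) := by
  obtain ⟨hfin, -, -, -, hcount, -⟩ := hS
  have : Finite S := hfin.to_subtype
  have hle := Set.ncard_setOf_exists_ne_apply_eq_le (Set.toFinite (colorings η S))
    (· ∘ Set.inclusion (S.sdiff_subset (t := edgeSet v S)))
  rw [image_comp_inclusion_colorings, ← colorCount_eq_ncard_colorings,
    ← colorCount_eq_ncard_colorings] at hle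
  rw [setOf_coloring_extends_nonuniquely_eq]
  omega

/-- few colorings of a balanced set extend non-uniquely. -/
theorem stmt19 {A : Type*} [Fintype A] (η : ℤ × ℤ → A) (v : R2) (hv : ‖v‖ = 1)
    (S : Set (ℤ × ℤ)) (hS : IsBalanced η v S) :
    Set.ncard {f : S → A | (∃ n : ℤ × ℤ, ∀ x : S, f x = η ((x : ℤ × ℤ) + n)) ∧
        ∃ g g' : ℤ × ℤ → A, IsColoring η S g ∧ IsColoring η S g' ∧
          (∀ x : S, (x : ℤ × ℤ) ∉ edgeSet v S →
            g (x : ℤ × ℤ) = f x ∧ g' (x : ℤ × ℤ) = f x) ∧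
          ∃ x ∈ S, g x ≠ g' x} ≤
      2 * ((edgeSet v S).ncard - 1) :=
  stmt19_general η v S hS
end
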